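/- arXiv:2007.11513 — 5 statements merged into one kernel-verified Lean document; each statement's English description precedes it below -/
import Mathlib

section
/- For every integer r ≥ 1, every near-triangular 2r × 2r 0-1 matrix over GF(2) has rank at least r. -/
/-!
Over GF(2) the near-triangularity conditions say exactly that `M + Mᵀ` is the matrix `1 + J`
with `J` the all-ones matrix. Since `J * J = n • J` vanishes for even `n`, `1 + J` is an
involution, hence of full rank `2r`; subadditivity of rank and `rank Mᵀ = rank M` then give
`2r ≤ 2 * rank M`.
-/

open Matrix

namespace Matrix

variable {m n R K : Type*}

theorem rank_add_le [Fintype n] [Field K] (A B : Matrix m n K) :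
    (A + B).rank ≤ A.rank + B.rank := by
  rw [rank, rank, rank, mulVecLin_add]
  exact (Submodule.finrank_mono (LinearMap.range_add_le _ _)).trans
    (Submodule.finrank_add_le_finrank_add_finrank _ _)

section CharTwo

variable [Fintype n] [CommRing R] [CharP R 2]

theorem of_const_one_mul_self_of_even_card (h : Even (Fintype.card n)) :
    (of fun _ _ => 1 : Matrix n n R) * (of fun _ _ => 1) = 0 := by
  ext i j
  obtain ⟨k, hk⟩ := h
  simp [mul_apply, hk, ← two_mul, CharTwo.two_eq_zero]

theorem isUnit_one_add_of_const_one_of_even_card [DecidableEq n] (h : Even (Fintype.card n)) :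
    IsUnit (1 + of fun _ _ => 1 : Matrix n n R) := by
  refine IsUnit.of_mul_eq_one (1 + of fun _ _ => 1) ?_
  have hJJ : (of fun _ _ => 1 : Matrix n n R) + (of fun _ _ => 1) = 0 := by
    ext; simp [CharTwo.add_self_eq_zero]
  rw [add_mul, one_mul, mul_add, mul_one, of_const_one_mul_self_of_even_card h, add_zero,
    add_assoc, hJJ, add_zero]

end CharTwo

theorem add_transpose_eq_one_add_of_const_one [Ring R] [CharP R 2] [DecidableEq n] [LinearOrder n]
    {M : Matrix n n R} (hM : ∀ i j, (j < i → M i j = 1) ∧ (i < j → M i j = 0)) :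
    M + Mᵀ = 1 + of fun _ _ => 1 := by
  ext i j
  rcases lt_trichotomy i j with h | rfl | h
  · simp [(hM i j).2 h, (hM j i).1 h, h.ne]
  · simp [CharTwo.add_self_eq_zero]
  · simp [(hM i j).1 h, (hM j i).2 h, h.ne']

end Matrix

theorem stmt4_general (r : ℕ) (M : Matrix (Fin (2 * r)) (Fin (2 * r)) (ZMod 2))
    (hnear : ∀ i j : Fin (2 * r), (j < i → M i j = 1) ∧ (i < j → M i j = 0)) :
    r ≤ M.rank := by
  have hsum : (M + Mᵀ).rank = 2 * r := by
    rw [add_transpose_eq_one_add_of_const_one hnear,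
      rank_of_isUnit _ (isUnit_one_add_of_const_one_of_even_card (by simp)), Fintype.card_fin]
  have hle := rank_add_le M Mᵀ
  rw [hsum, rank_transpose] at hle
  omega

/-- For every integer `r ≥ 1`, every near-triangular `2r × 2r` 0-1 matrix over
GF(2) (entry 1 below the diagonal, 0 above the diagonal, arbitrary diagonal)
has rank at least `r`. -/
theorem stmt4 (r : ℕ) (hr : 1 ≤ r) (M : Matrix (Fin (2 * r)) (Fin (2 * r)) (ZMod 2))
    (hnear : ∀ i j : Fin (2 * r), (j < i → M i j = 1) ∧ (i < j → M i j = 0)) :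
    r ≤ M.rank :=
  stmt4_general r M hnear
end

section
/- Let G be a graph and r ≥ 1 an integer. If every partition (Y, Z) of V(G) with cut-rank less than r is unbalanced, then the rankwidth of G is at least r. -/
/-!
Suppose every edge of a tree `T` whose vertices have degree 1 or 3 splits its `n` leaves in an
unbalanced way. Among the oriented edges `ab` whose `a`-side holds fewer than `n / 3` leaves,
pick one with as many leaves on the `a`-side as possible. Then `b` is not a leaf (else the
`a`-side would hold `n - 1` leaves), so `b` has two further neighbours `c` and `d`. The `b`-sides
of `bc` and `bd` strictly contain the `a`-side of `ab`, so by maximality they hold more than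
`2n / 3` leaves. Hence each of the three branches at `b` holds fewer than `n / 3` of the `n`
leaves, which is absurd.
-/

/-- The cut-rank of a partition `(Y, Yᶜ)` of the vertices of `G`: the GF(2)-rank
of the bipartite adjacency matrix with rows `Y` and columns `Yᶜ`. -/
noncomputable def cutRank {V : Type*} [Fintype V] (G : SimpleGraph V) (Y : Set V) : ℕ := by
  classical
  haveI : Fintype ↥Y := Fintype.ofFinite _
  haveI : Fintype ↥(Yᶜ) := Fintype.ofFinite _
  exact (Matrix.of fun (y : Y) (z : ↥(Yᶜ)) =>
    if G.Adj y.1 z.1 then (1 : ZMod 2) else 0).rank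

namespace SimpleGraph

variable {N : Type*} {T : SimpleGraph N} {a b c d x : N}

def side (T : SimpleGraph N) (a b : N) : Set N :=
  {x | (T.deleteEdges {s(a, b)}).Reachable x a}

def leafSide (T : SimpleGraph N) [Fintype N] [DecidableRel T.Adj] (a b : N) :
    Set {v // T.degree v = 1} :=
  {l | l.1 ∈ T.side a b}

lemma mem_side_self : a ∈ T.side a b := Reachable.refl a

lemma reachable_deleteEdges_of_notMem_support {y : N} (p : T.Walk x y) (hb : b ∉ p.support)
    (c : N) : (T.deleteEdges {s(c, b)}).Reachable x y :=
  reachable_deleteEdges_iff_exists_walk.mpr ⟨p, fun h => hb (p.snd_mem_support_of_mem_edges h)⟩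

lemma Preconnected.exists_adj_mem_side (hT : T.Preconnected) (hx : x ≠ b) :
    ∃ y, T.Adj y b ∧ x ∈ T.side y b := by
  obtain ⟨p, hp⟩ := hT.exists_isPath b x
  cases p with
  | nil => exact absurd rfl hx
  | cons hby q =>
    rw [Walk.cons_isPath_iff] at hp
    refine ⟨_, hby.symm, reachable_deleteEdges_of_notMem_support q.reverse ?_ _⟩
    simpa using hp.2

lemma exists_neighbors_of_degree_eq_three [Fintype N] [DecidableRel T.Adj]
    (hb : T.degree b = 3) (hab : T.Adj a b) :
    ∃ c d, T.Adj c b ∧ T.Adj d b ∧ a ≠ c ∧ a ≠ d ∧ c ≠ d ∧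
      ∀ y, T.Adj y b → y = a ∨ y = c ∨ y = d := by
  classical
  have ha : a ∈ T.neighborFinset b := (T.mem_neighborFinset b a).mpr hab.symm
  have hcard : ((T.neighborFinset b).erase a).card = 2 := by
    rw [Finset.card_erase_of_mem ha, card_neighborFinset_eq_degree, hb]
  obtain ⟨c, d, hcd, hrest⟩ := Finset.card_eq_two.mp hcard
  have hadj : ∀ y, T.Adj y b ↔ y = a ∨ y = c ∨ y = d := fun y => by
    rw [adj_comm, ← mem_neighborFinset, ← Finset.insert_erase ha, hrest]
    simp
  have hc : c ∈ (T.neighborFinset b).erase a := by simp [hrest]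
  have hd : d ∈ (T.neighborFinset b).erase a := by simp [hrest]
  exact ⟨c, d, (hadj c).mpr (by simp), (hadj d).mpr (by simp),
    (Finset.ne_of_mem_erase hc).symm, (Finset.ne_of_mem_erase hd).symm, hcd,
    fun y => (hadj y).mp⟩

namespace IsAcyclic

lemma not_reachable_deleteEdges (hT : T.IsAcyclic) (hab : T.Adj a b) :
    ¬ (T.deleteEdges {s(a, b)}).Reachable a b :=
  isAcyclic_iff_forall_adj_isBridge.mp hT hab

lemma notMem_side_swap (hT : T.IsAcyclic) (hab : T.Adj a b) (hx : x ∈ T.side a b) :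
    x ∉ T.side b a := by
  intro hx'
  have hxb : (T.deleteEdges {s(a, b)}).Reachable x b := by rwa [Sym2.eq_swap]
  exact hT.not_reachable_deleteEdges hab (hx.symm.trans hxb)

lemma exists_walk_notMem_support (hT : T.IsAcyclic) (hab : T.Adj a b) (hx : x ∈ T.side a b) :
    ∃ p : T.Walk x a, b ∉ p.support := by
  classical
  obtain ⟨p⟩ := hx
  refine ⟨p.mapLe (T.deleteEdges_le _), fun hb => hT.not_reachable_deleteEdges hab ?_⟩
  rw [Walk.support_mapLe_eq_support] at hb
  exact (p.dropUntil b hb).reverse.reachable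

lemma side_subset_side (hT : T.IsAcyclic) (hab : T.Adj a b) (hac : a ≠ c) :
    T.side a b ⊆ T.side b c := fun x hx => by
  obtain ⟨p, hp⟩ := hT.exists_walk_notMem_support hab hx
  have hxa : (T.deleteEdges {s(b, c)}).Reachable x a := by
    rw [Sym2.eq_swap]
    exact reachable_deleteEdges_of_notMem_support p hp c
  refine hxa.trans (Adj.reachable ?_)
  rw [deleteEdges_adj]
  exact ⟨hab, by simp [hab.ne, hac]⟩

variable [Fintype N] [DecidableRel T.Adj]

lemma leafSide_nonempty (hT : T.IsAcyclic) (hab : T.Adj a b) : (T.leafSide a b).Nonempty := by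
  induction hn : (T.side a b).ncard using Nat.strong_induction_on generalizing a b with
  | _ n ih =>
    by_cases ha : T.degree a = 1
    · exact ⟨⟨a, ha⟩, mem_side_self⟩
    have hdeg : 1 < (T.neighborFinset a).card := by
      have := Finset.card_pos.mpr ⟨b, (T.mem_neighborFinset a b).mpr hab⟩
      rw [card_neighborFinset_eq_degree] at this ⊢
      omega
    obtain ⟨c, hc, hcb⟩ := Finset.exists_mem_ne hdeg b
    rw [mem_neighborFinset] at hc
    have hsub := hT.side_subset_side hc.symm hcb
    have hssub : T.side c a ⊂ T.side a b := (Set.ssubset_iff_of_subset hsub).mpr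
      ⟨a, mem_side_self, hT.notMem_side_swap hc mem_side_self⟩
    obtain ⟨l, hl⟩ := ih _ (hn ▸ Set.ncard_lt_ncard hssub) hc.symm rfl
    exact ⟨l, hsub hl⟩

lemma leafSide_ssubset (hT : T.IsAcyclic) (hab : T.Adj a b) (hdb : T.Adj d b) (hac : a ≠ c)
    (had : a ≠ d) (hcd : c ≠ d) : T.leafSide a b ⊂ T.leafSide b c := by
  have hsub : T.leafSide a b ⊆ T.leafSide b c := fun l hl => hT.side_subset_side hab hac hl
  refine (Set.ssubset_iff_of_subset hsub).mpr ?_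
  obtain ⟨l, hl⟩ := hT.leafSide_nonempty hdb
  exact ⟨l, hT.side_subset_side hdb hcd.symm hl,
    fun hl' => hT.notMem_side_swap hdb hl (hT.side_subset_side hab had hl')⟩

end IsAcyclic

namespace Preconnected

variable [Fintype N] [DecidableRel T.Adj]

lemma card_leaves_le_ncard_leafSide_add_one (hT : T.Preconnected) (hb : T.degree b = 1)
    (hab : T.Adj a b) : Nat.card {v // T.degree v = 1} ≤ (T.leafSide a b).ncard + 1 := by
  have hcover : Set.univ ⊆ insert ⟨b, hb⟩ (T.leafSide a b) := fun l _ => by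
    by_cases hlb : l.1 = b
    · exact Or.inl (Subtype.ext hlb)
    obtain ⟨y, hyb, hl⟩ := hT.exists_adj_mem_side hlb
    have hya : y = a := Finset.card_le_one.mp (by rw [card_neighborFinset_eq_degree, hb]) y
      ((T.mem_neighborFinset b y).mpr hyb.symm) a ((T.mem_neighborFinset b a).mpr hab.symm)
    exact Or.inr (hya ▸ hl)
  rw [← Set.ncard_univ]
  exact (Set.ncard_le_ncard hcover).trans (Set.ncard_insert_le _ _)

lemma card_leaves_le_sum_ncard_leafSide (hT : T.Preconnected) (hb : T.degree b ≠ 1)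
    (hnbr : ∀ y, T.Adj y b → y = a ∨ y = c ∨ y = d) :
    Nat.card {v // T.degree v = 1} ≤
      (T.leafSide a b).ncard + (T.leafSide c b).ncard + (T.leafSide d b).ncard := by
  have hcover : Set.univ ⊆ T.leafSide a b ∪ T.leafSide c b ∪ T.leafSide d b := fun l _ => by
    obtain ⟨y, hyb, hl⟩ := hT.exists_adj_mem_side fun h : l.1 = b => hb (h ▸ l.2)
    rcases hnbr y hyb with rfl | rfl | rfl
    exacts [Or.inl (Or.inl hl), Or.inl (Or.inr hl), Or.inr hl]
  rw [← Set.ncard_univ]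
  refine (Set.ncard_le_ncard hcover).trans ((Set.ncard_union_le _ _).trans ?_)
  exact Nat.add_le_add_right (Set.ncard_union_le _ _) _

end Preconnected

namespace IsTree

lemma compl_side (hT : T.IsTree) (hab : T.Adj a b) : (T.side a b)ᶜ = T.side b a := by
  ext x
  refine ⟨fun hx => ?_, fun hx hx' => hT.isAcyclic.notMem_side_swap hab hx' hx⟩
  by_cases hxb : x = b
  · exact hxb ▸ mem_side_self
  obtain ⟨y, hyb, hy⟩ := hT.connected.preconnected.exists_adj_mem_side hxb
  by_cases hya : y = a
  · exact absurd (hya ▸ hy) hx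
  · exact hT.isAcyclic.side_subset_side hyb hya hy

variable [Fintype N] [DecidableRel T.Adj]

lemma compl_leafSide (hT : T.IsTree) (hab : T.Adj a b) :
    (T.leafSide a b)ᶜ = T.leafSide b a := by
  ext l
  exact Set.ext_iff.mp (hT.compl_side hab) l.1

lemma ncard_leafSide_add_ncard_leafSide (hT : T.IsTree) (hab : T.Adj a b) :
    (T.leafSide a b).ncard + (T.leafSide b a).ncard = Nat.card {v // T.degree v = 1} := by
  rw [← hT.compl_leafSide hab]
  exact Set.ncard_add_ncard_compl _

theorem exists_balanced_edge [Nontrivial N] (hT : T.IsTree)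
    (hdeg : ∀ v, T.degree v ≠ 1 → T.degree v = 3) :
    ∃ a b, T.Adj a b ∧ Nat.card {v // T.degree v = 1} ≤ 3 * (T.leafSide a b).ncard ∧
      3 * (T.leafSide a b).ncard ≤ 2 * Nat.card {v // T.degree v = 1} := by
  set n := Nat.card {v // T.degree v = 1}
  by_contra! hunbalanced
  let S : Set (N × N) := {p | T.Adj p.1 p.2 ∧ 3 * (T.leafSide p.1 p.2).ncard < n}
  have hS : S.Nonempty := by
    obtain ⟨x, b, hxb⟩ := exists_pair_ne N
    obtain ⟨a, hab, -⟩ := hT.connected.preconnected.exists_adj_mem_side hxb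
    have := hT.ncard_leafSide_add_ncard_leafSide hab
    by_cases h : 3 * (T.leafSide a b).ncard < n
    · exact ⟨(a, b), hab, h⟩
    · have := hunbalanced a b hab (by omega)
      exact ⟨(b, a), hab.symm, show 3 * (T.leafSide b a).ncard < n by omega⟩
  obtain ⟨⟨a, b⟩, hmem, hmax⟩ :=
    S.exists_max_image (fun p => (T.leafSide p.1 p.2).ncard) S.toFinite hS
  obtain ⟨hab, hab_small⟩ : T.Adj a b ∧ 3 * (T.leafSide a b).ncard < n := hmem
  have hbranch : ∀ c, T.Adj c b → T.leafSide a b ⊂ T.leafSide b c →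
      3 * (T.leafSide c b).ncard < n := fun c hcb hssub => by
    have hlt := Set.ncard_lt_ncard hssub
    have hbc : ¬ 3 * (T.leafSide b c).ncard < n :=
      fun h => (hmax (b, c) ⟨hcb.symm, h⟩).not_gt hlt
    have := hT.ncard_leafSide_add_ncard_leafSide hcb
    have := hunbalanced b c hcb.symm (by omega)
    omega
  by_cases hb : T.degree b = 1
  · have := hT.connected.preconnected.card_leaves_le_ncard_leafSide_add_one hb hab
    have := (hT.isAcyclic.leafSide_nonempty hab).ncard_pos
    omega
  · obtain ⟨c, d, hcb, hdb, hac, had, hcd, hnbr⟩ :=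
      exists_neighbors_of_degree_eq_three (hdeg b hb) hab
    have := hbranch c hcb (hT.isAcyclic.leafSide_ssubset hab hdb hac had hcd)
    have := hbranch d hdb (hT.isAcyclic.leafSide_ssubset hab hcb had hac hcd.symm)
    have := hT.connected.preconnected.card_leaves_le_sum_ncard_leafSide hb hnbr
    omega

end IsTree

end SimpleGraph

theorem stmt6_general {V : Type*} [Fintype V] (G : SimpleGraph V) (r : ℕ)
    (hunbal : ∀ Y : Set V, cutRank G Y < r →
      ¬ (Fintype.card V ≤ 3 * Y.ncard ∧ 3 * Y.ncard ≤ 2 * Fintype.card V ∧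
         Fintype.card V ≤ 3 * Yᶜ.ncard ∧ 3 * Yᶜ.ncard ≤ 2 * Fintype.card V)) :
    ∀ (N : Type) [Fintype N] [DecidableEq N] (T : SimpleGraph N),
      ∀ [DecidableRel T.Adj],
      T.IsTree → 2 ≤ Fintype.card N →
      (∀ v : N, T.degree v ≠ 1 → T.degree v = 3) →
      ∀ _φ : {v : N // T.degree v = 1} ≃ V,
      ∃ a b : N, T.Adj a b ∧
        r ≤ cutRank G ((fun l => _φ l) ''
          {l : {v : N // T.degree v = 1} |
            (T.deleteEdges {s(a, b)}).Reachable l.1 a}) := by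
  intro N _ _ T _ hT hcard hdeg φ
  have : Nontrivial N := Fintype.one_lt_card_iff_nontrivial.mp hcard
  obtain ⟨a, b, hab, hlow, hhigh⟩ := hT.exists_balanced_edge hdeg
  refine ⟨a, b, hab, not_lt.mp fun hlt => hunbal (φ '' T.leafSide a b) hlt ?_⟩
  have hV : Fintype.card V = Nat.card {v // T.degree v = 1} := by
    rw [← Nat.card_eq_fintype_card, Nat.card_congr φ]
  have hY : (φ '' T.leafSide a b).ncard = (T.leafSide a b).ncard :=
    Set.ncard_image_of_injective _ φ.injective
  have hYc : (φ '' T.leafSide a b)ᶜ.ncard + (T.leafSide a b).ncard = Fintype.card V := by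
    rw [← hY, Set.ncard_compl_add_ncard, Nat.card_eq_fintype_card]
  omega

/-- Let `G` be a graph and `r ≥ 1`.  If every partition `(Y, Yᶜ)` of `V(G)`
with cut-rank less than `r` is unbalanced, then the rankwidth of `G` is at
least `r`: every tree decomposition of `G` (cubic tree `T` whose leaves are the
vertices of `G`) has an edge of width at least `r`. -/
theorem stmt6 {V : Type*} [Fintype V] (G : SimpleGraph V) (r : ℕ) (hr : 1 ≤ r)
    (hunbal : ∀ Y : Set V, cutRank G Y < r →
      ¬ (Fintype.card V ≤ 3 * Y.ncard ∧ 3 * Y.ncard ≤ 2 * Fintype.card V ∧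
         Fintype.card V ≤ 3 * Yᶜ.ncard ∧ 3 * Yᶜ.ncard ≤ 2 * Fintype.card V)) :
    ∀ (N : Type) [Fintype N] [DecidableEq N] (T : SimpleGraph N),
      ∀ [DecidableRel T.Adj],
      T.IsTree → 2 ≤ Fintype.card N →
      (∀ v : N, T.degree v ≠ 1 → T.degree v = 3) →
      ∀ _φ : {v : N // T.degree v = 1} ≃ V,
      ∃ a b : N, T.Adj a b ∧
        r ≤ cutRank G ((fun l => _φ l) ''
          {l : {v : N // T.degree v = 1} |
            (T.deleteEdges {s(a, b)}).Reachable l.1 a}) :=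
  stmt6_general G r hunbal
end

section
/- Let G be a graph containing disjoint ordered vertex sets X = {u^1,…,u^k} and X' = {v^1,…,v^k} forming a regular crossing (u^j v^{j'} ∈ E(G) iff j + j' ≥ k+1). Let (Y, Z) be a partition of V(G) of cut-rank less than r (r ≥ 2). Then X has fewer than 8r blocks with respect to (Y, Z). -/
open Finset

theorem Matrix.card_le_rank_of_isLowerTriangular_submatrix {R m n ι : Type*} [CommRing R]
    [IsDomain R] [Fintype n] [Fintype ι] [LinearOrder ι] (A : Matrix m n R) (f : ι → m)
    (g : ι → n) (hA : (A.submatrix f g).IsLowerTriangular) (hdiag : ∀ i, A (f i) (g i) ≠ 0) :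
    Fintype.card ι ≤ A.rank := by
  classical
  calc Fintype.card ι = (A.submatrix f g).rank := by
        refine (rank_of_det_ne_zero ?_).symm
        rw [det_of_isLowerTriangular _ hA]
        exact prod_ne_zero_iff.mpr fun i _ => hdiag i
    _ ≤ A.rank := rank_submatrix_le A f g

theorem Finset.card_le_add_of_opposite_sides {α ι : Type*} (Y : Set α) (S : Finset ι)
    (p q : ι → α) (hside : ∀ i ∈ S, p i ∈ Y ↔ q i ∉ Y) (c : Set α → ℕ)
    (hc : ∀ Z T, T ⊆ S → (∀ i ∈ T, p i ∈ Z) → (∀ i ∈ T, q i ∉ Z) → #T ≤ c Z) :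
    #S ≤ c Y + c Yᶜ := by
  classical
  rw [← card_filter_add_card_filter_not (fun i => p i ∈ Y)]
  refine add_le_add (hc _ _ (filter_subset _ _) (fun i hi => (mem_filter.1 hi).2)
    fun i hi => (hside i (mem_filter.1 hi).1).1 (mem_filter.1 hi).2) ?_
  refine hc _ _ (filter_subset _ _) (fun i hi => (mem_filter.1 hi).2) fun i hi => ?_
  exact not_not.2 <| (hside i (mem_filter.1 hi).1).not_left.1 (mem_filter.1 hi).2

section CutRank

variable {V : Type*} [Fintype V] (G : SimpleGraph V) (Y : Set V)

theorem cutRank_compl : cutRank G Yᶜ = cutRank G Y := by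
  classical
  unfold cutRank
  let := Fintype.ofFinite ↥Yᶜ
  let := Fintype.ofFinite ↥Yᶜᶜ
  conv_rhs => rw [← Matrix.rank_transpose,
    ← Matrix.rank_submatrix _ (Equiv.refl _) (Equiv.setCongr (compl_compl Y))]
  congr 1
  ext y z
  simp [G.adj_comm]

variable {ι : Type*} [LinearOrder ι]

theorem card_le_cutRank_of_triangular [Fintype ι] (p q : ι → V) (hp : ∀ i, p i ∈ Y)
    (hq : ∀ i, q i ∉ Y) (hdiag : ∀ i, G.Adj (p i) (q i))
    (htri : ∀ ⦃i j⦄, i < j → ¬ G.Adj (p i) (q j)) :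
    Fintype.card ι ≤ cutRank G Y := by
  let := Fintype.ofFinite ↥Yᶜ
  exact Matrix.card_le_rank_of_isLowerTriangular_submatrix _ (fun i => ⟨p i, hp i⟩)
    (fun i => ⟨q i, hq i⟩) (fun i j hij => by simp [htri (OrderDual.toDual_lt_toDual.mp hij)])
    (fun i => by simp [hdiag i])

theorem card_le_cutRank_of_adj_iff_le (S : Finset ι) (p q : ι → V) (hp : ∀ i ∈ S, p i ∈ Y)
    (hq : ∀ i ∈ S, q i ∉ Y) (hadj : ∀ i ∈ S, ∀ j ∈ S, G.Adj (p i) (q j) ↔ j ≤ i) :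
    #S ≤ cutRank G Y := by
  simpa using card_le_cutRank_of_triangular G Y (ι := S) (fun i => p i) (fun i => q i)
    (fun i => hp i i.2) (fun i => hq i i.2) (fun i => (hadj i i.2 i i.2).2 le_rfl)
    (fun i j hij => by simpa [hadj i i.2 j j.2] using hij)

theorem card_le_cutRank_add_one_of_adj_iff_lt (S : Finset ι) (p q : ι → V)
    (hp : ∀ i ∈ S, p i ∈ Y) (hq : ∀ i ∈ S, q i ∉ Y)
    (hadj : ∀ i ∈ S, ∀ j ∈ S, G.Adj (p i) (q j) ↔ j < i) :
    #S ≤ cutRank G Y + 1 := by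
  cases hS : #S with
  | zero => simp
  | succ s =>
    -- pair the `(a+1)`-st row with the `a`-th column to make the strict pattern non-strict
    let e := S.orderIsoOfFin hS
    have he : ∀ a b, (e a : ι) < e b ↔ a < b := fun a b => by simp
    simpa using card_le_cutRank_of_triangular G Y (fun a : Fin s => p (e a.succ))
      (fun a => q (e a.castSucc)) (fun a => hp _ (e _).2) (fun a => hq _ (e _).2)
      (fun a => by simp [hadj _ (e _).2 _ (e _).2, he])
      (fun a b hab => by
        simp [hadj _ (e _).2 _ (e _).2, he, Fin.castSucc_lt_succ_iff, hab.not_ge])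

theorem card_le_two_mul_cutRank_of_adj_iff_le (S : Finset ι) (p q : ι → V)
    (hside : ∀ i ∈ S, p i ∈ Y ↔ q i ∉ Y)
    (hadj : ∀ i ∈ S, ∀ j ∈ S, G.Adj (p i) (q j) ↔ j ≤ i) :
    #S ≤ 2 * cutRank G Y := by
  have := card_le_add_of_opposite_sides Y S p q hside (cutRank G)
    fun Z T hT hp hq => card_le_cutRank_of_adj_iff_le G Z T p q hp hq
      fun i hi j hj => hadj i (hT hi) j (hT hj)
  rw [cutRank_compl] at this
  omega

theorem card_le_two_mul_cutRank_add_two_of_adj_iff_lt (S : Finset ι) (p q : ι → V)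
    (hside : ∀ i ∈ S, p i ∈ Y ↔ q i ∉ Y)
    (hadj : ∀ i ∈ S, ∀ j ∈ S, G.Adj (p i) (q j) ↔ j < i) :
    #S ≤ 2 * cutRank G Y + 2 := by
  have := card_le_add_of_opposite_sides Y S p q hside (cutRank G · + 1)
    fun Z T hT hp hq => card_le_cutRank_add_one_of_adj_iff_lt G Z T p q hp hq
      fun i hi j hj => hadj i (hT hi) j (hT hj)
  rw [cutRank_compl] at this
  omega

end CutRank

theorem adj_rev_iff_of_regularCrossing {V : Type*} {G : SimpleGraph V} {k : ℕ}
    {u v : Fin k → V}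
    (hcross : ∀ p q : Fin k, G.Adj (u p) (v q) ↔ k ≤ (p : ℕ) + (q : ℕ) + 1) (p q : Fin k) :
    G.Adj (u p) (v q.rev) ↔ q ≤ p := by
  rw [hcross, Fin.val_rev, Fin.le_def]
  omega

open Classical in
theorem stmt7_general {V : Type*} [Fintype V] (G : SimpleGraph V) (k r : ℕ)
    (u v : Fin k → V)
    (hcross : ∀ p q : Fin k, G.Adj (u p) (v q) ↔ k ≤ (p : ℕ) + (q : ℕ) + 1)
    (Y : Set V) (hrank : cutRank G Y < r) :
    (Finset.univ.filter (fun i : Fin k =>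
      ∃ h : (i : ℕ) + 1 < k,
        ¬ (u i ∈ Y ↔ u (⟨(i : ℕ) + 1, h⟩ : Fin k) ∈ Y))).card + 1 < 8 * r := by
  set B := Finset.univ.filter (fun i : Fin k =>
      ∃ h : (i : ℕ) + 1 < k, ¬ (u i ∈ Y ↔ u (⟨(i : ℕ) + 1, h⟩ : Fin k) ∈ Y))
  let next : Fin k → Fin k := fun i => ⟨min (i + 1) (k - 1), by omega⟩
  have hnext : ∀ i ∈ B, ¬ (u i ∈ Y ↔ u (next i) ∈ Y) ∧ (next i : ℕ) = i + 1 := by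
    intro i hi
    obtain ⟨h, hchange⟩ := (mem_filter.1 hi).2
    have : next i = ⟨i + 1, h⟩ := Fin.ext (by simp [next]; omega)
    exact ⟨this ▸ hchange, by simp [this]⟩
  let w : Fin k → V := fun i => v (next i).rev
  have hle : ∀ i ∈ B, ∀ j ∈ B, G.Adj (u (next i)) (w j) ↔ j ≤ i := fun i hi j hj => by
    rw [adj_rev_iff_of_regularCrossing hcross, Fin.le_def, Fin.le_def, (hnext i hi).2,
      (hnext j hj).2]
    omega
  have hlt : ∀ i ∈ B, ∀ j ∈ B, G.Adj (u i) (w j) ↔ j < i := fun i hi j hj => by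
    rw [adj_rev_iff_of_regularCrossing hcross, Fin.le_def, Fin.lt_def, (hnext j hj).2]
    omega
  have h₁ := card_le_two_mul_cutRank_of_adj_iff_le G Y {i ∈ B | u (next i) ∈ Y ↔ w i ∉ Y}
    (u ∘ next) w (fun i hi => (mem_filter.1 hi).2)
    (fun i hi j hj => hle i (mem_filter.1 hi).1 j (mem_filter.1 hj).1)
  have h₂ := card_le_two_mul_cutRank_add_two_of_adj_iff_lt G Y
    {i ∈ B | ¬(u (next i) ∈ Y ↔ w i ∉ Y)} u w
    (fun i hi => by
      rw [mem_filter] at hi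
      have := (hnext i hi.1).1
      tauto)
    (fun i hi j hj => hlt i (mem_filter.1 hi).1 j (mem_filter.1 hj).1)
  have := card_filter_add_card_filter_not (s := B) (fun i => u (next i) ∈ Y ↔ w i ∉ Y)
  omega

open Classical in
/-- Let `G` contain disjoint ordered vertex sets `X = {u 0,…,u (k-1)}` and
`X' = {v 0,…,v (k-1)}` forming a regular crossing (in 1-based indexing,
`u^j v^{j'} ∈ E(G)` iff `j + j' ≥ k + 1`).  Let `(Y, Yᶜ)` be a partition of
`V(G)` of cut-rank less than `r`, where `r ≥ 2`.  Then `X` has fewer than `8r`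
blocks with respect to `(Y, Yᶜ)` — the number of blocks being the number of
consecutive membership changes along `X` plus one. -/
theorem stmt7 {V : Type*} [Fintype V] (G : SimpleGraph V) (k r : ℕ)
    (hk : 1 ≤ k) (hr : 2 ≤ r)
    (u v : Fin k → V)
    (hu : Function.Injective u) (hv : Function.Injective v)
    (hdisj : Disjoint (Set.range u) (Set.range v))
    (hcross : ∀ p q : Fin k, G.Adj (u p) (v q) ↔ k ≤ (p : ℕ) + (q : ℕ) + 1)
    (Y : Set V) (hrank : cutRank G Y < r) :
    (Finset.univ.filter (fun i : Fin k =>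
      ∃ h : (i : ℕ) + 1 < k,
        ¬ (u i ∈ Y ↔ u (⟨(i : ℕ) + 1, h⟩ : Fin k) ∈ Y))).card + 1 < 8 * r :=
  stmt7_general G k r u v hcross Y hrank
end

section
/- Let G be a carousel whose triple (G, X_i, X_{i+1}) is a regular matching (u^j adjacent to v^{j'} iff j = j'), and let (Y, Z) be a partition of V(G) of cut-rank less than r (r ≥ 2). If the interval X_{i,j} has label Y_m (i.e., (m−1)r < |X_{i,j} ∩ Y| ≤ mr), then X_{i+1,j} has label Y_{max(m−1,0)}, Y_m or Y_{m+1}. -/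
/-- If a matrix contains an `n × n` identity submatrix (indexed by arbitrary functions),
then its rank is at least `n`. -/
lemma rank_ge_of_identity {K : Type*} [Field K] {ι κ : Type*} [Fintype ι] [Fintype κ]
    (A : Matrix ι κ K) (n : ℕ) (f : Fin n → ι) (g : Fin n → κ)
    (h : ∀ i j, A (f i) (g j) = if i = j then 1 else 0) : n ≤ A.rank := by
  classical
  set w : Fin n → (ι → K) := fun j => A.mulVec (Pi.single (g j) 1) with hw
  have hwf : ∀ i j : Fin n, w j (f i) = if i = j then 1 else 0 := by
    intro i j
    simp only [hw, Matrix.mulVec_single, mul_one, MulOpposite.op_one, one_smul]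
    exact h i j
  have hli : LinearIndependent K w := by
    rw [Fintype.linearIndependent_iff]
    intro c hc i
    have hci := congrFun hc (f i)
    simp only [Finset.sum_apply, Pi.smul_apply, smul_eq_mul, hwf, mul_ite, mul_one,
      mul_zero, Finset.sum_ite_eq, Finset.mem_univ, if_true, Pi.zero_apply] at hci
    exact hci
  have hmem : ∀ j : Fin n, w j ∈ LinearMap.range A.mulVecLin := fun j =>
    ⟨Pi.single (g j) 1, rfl⟩
  have hli' : LinearIndependent K
      (fun j : Fin n => (⟨w j, hmem j⟩ : LinearMap.range A.mulVecLin)) := by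
    apply LinearIndependent.of_comp (LinearMap.range A.mulVecLin).subtype
    exact hli
  have := hli'.fintype_card_le_finrank
  simpa [Matrix.rank] using this

/-- Key rank counting: given a regular matching between `w` and `x`, the set of indices `p`
with `w p ∈ Y` and `x p ∉ Y` has size less than `r`, whenever the cut-rank of `(Y, Yᶜ)` is
less than `r`. -/
lemma cross_lt {V : Type*} [Fintype V] (G : SimpleGraph V) (Y : Set V) (r : ℕ)
    (hrank : cutRank G Y < r) {k : ℕ} (w x : Fin k → V)
    (hadj : ∀ p q : Fin k, G.Adj (w p) (x q) ↔ p = q)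
    (S : Set (Fin k)) (hS : ∀ p ∈ S, w p ∈ Y ∧ x p ∉ Y) : S.ncard < r := by
  classical
  by_contra hcon
  push_neg at hcon
  obtain ⟨T, hTS, hT⟩ := Set.exists_subset_card_eq hcon
  have hTfin : T.Finite := Set.toFinite T
  have hcard : hTfin.toFinset.card = r := by
    rw [← Set.ncard_eq_toFinset_card _ hTfin]; exact hT
  let e : Fin r ≃ {p // p ∈ hTfin.toFinset} := (Finset.equivFinOfCardEq hcard).symm
  let f : Fin r → Fin k := fun i => (e i : Fin k)
  have hfinj : Function.Injective f := fun i j hij => e.injective (Subtype.ext hij)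
  have hfS : ∀ i, f i ∈ S := fun i => hTS (by simpa using (e i).2)
  letI : Fintype ↥Y := Fintype.ofFinite _
  letI : Fintype ↥(Yᶜ) := Fintype.ofFinite _
  have hrank' : cutRank G Y = (Matrix.of fun (y : Y) (z : ↥(Yᶜ)) =>
      if G.Adj y.1 z.1 then (1 : ZMod 2) else 0).rank := by
    unfold cutRank
    rfl
  have hge := rank_ge_of_identity (K := ZMod 2)
      (Matrix.of fun (y : Y) (z : ↥(Yᶜ)) =>
        if G.Adj y.1 z.1 then (1 : ZMod 2) else 0) r
      (fun i => ⟨w (f i), (hS _ (hfS i)).1⟩)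
      (fun j => ⟨x (f j), (hS _ (hfS j)).2⟩)
      (by
        intro i j
        have hiff : G.Adj (w (f i)) (x (f j)) ↔ i = j :=
          (hadj _ _).trans hfinj.eq_iff
        simp only [Matrix.of_apply, hiff])
  rw [hrank'] at hrank
  omega

/-- Pure arithmetic about labels. -/
lemma arith_label (r m a b : ℕ) (hr : 1 ≤ r) (ha1 : a ≤ m * r)
    (ha2 : m = 0 ∨ (m - 1) * r < a) (h1 : b ≤ a + (r - 1)) (h2 : a ≤ b + (r - 1)) :
    ∃ m', (m' = m - 1 ∨ m' = m ∨ m' = m + 1) ∧ b ≤ m' * r ∧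
      (m' = 0 ∨ (m' - 1) * r < b) := by
  match m with
  | 0 =>
    have ha : a = 0 := by simpa using ha1
    rcases Nat.eq_zero_or_pos b with hb | hb
    · exact ⟨0, Or.inr (Or.inl rfl), by omega, Or.inl rfl⟩
    · refine ⟨1, Or.inr (Or.inr rfl), ?_, Or.inr ?_⟩
      · have : 1 * r = r := one_mul r
        omega
      · have : (1 - 1) * r = 0 := by norm_num
        omega
  | n + 1 =>
    have ha2' : n * r < a := by
      rcases ha2 with h | h
      · exact absurd h (by omega)
      · simpa using h
    have e1 : (n + 1) * r = n * r + r := by ring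
    have e2 : (n + 2) * r = n * r + r + r := by ring
    have e2' : (n + 1 + 1) * r = n * r + r + r := by ring
    have e3 : (n + 2 - 1) * r = n * r + r := by rw [show n + 2 - 1 = n + 1 from rfl]; ring
    have e3' : (n + 1 + 1 - 1) * r = n * r + r := by
      rw [show n + 1 + 1 - 1 = n + 1 from rfl]; ring
    have e4 : (n + 1 - 1) * r = n * r := by rw [show n + 1 - 1 = n from rfl]
    by_cases hb1 : (n + 1) * r < b
    · exact ⟨n + 2, Or.inr (Or.inr rfl), by omega, Or.inr (by omega)⟩
    · by_cases hb2 : n * r < b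
      · exact ⟨n + 1, Or.inr (Or.inl rfl), by omega, Or.inr (by omega)⟩
      · refine ⟨n, Or.inl (by omega), by omega, ?_⟩
        match n with
        | 0 => exact Or.inl rfl
        | p + 1 =>
          refine Or.inr ?_
          have e4 : (p + 1) * r = p * r + r := by ring
          have e5 : (p + 1 - 1) * r = p * r := by simp
          omega

/-- Label propagation along a regular matching in a carousel.  Let
`(G, X_i, X_{i+1})` be a regular matching (`x_i^j` adjacent to `x_{i+1}^{j'}`
iff `j = j'`), `(Y, Yᶜ)` a partition of `V(G)` of cut-rank less than `r`
(`r ≥ 2`), and `X_{i,t} = {x_i^{2^{t-1}},…,x_i^{2^t-1}}` a dyadic interval.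
A set `S` has label `Y_m` iff `(m−1)r < |S ∩ Y| ≤ mr` (so `m = ⌈|S ∩ Y|/r⌉`).
If `X_{i,t}` has label `Y_m`, then `X_{i+1,t}` has label `Y_{max(m−1,0)}`,
`Y_m` or `Y_{m+1}`. -/
theorem stmt9 {V : Type*} [Fintype V] (G : SimpleGraph V) (r s k t m : ℕ)
    (hr : 2 ≤ r) (hk : k = 2 ^ s - 1) (ht1 : 1 ≤ t) (hts : t ≤ s)
    (u v : Fin k → V)
    (hu : Function.Injective u) (hv : Function.Injective v)
    (hdisj : Disjoint (Set.range u) (Set.range v))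
    (hmatch : ∀ p q : Fin k, G.Adj (u p) (v q) ↔ p = q)
    (Y : Set V) (hrank : cutRank G Y < r)
    (hlab₁ : ({p : Fin k | 2 ^ (t - 1) ≤ (p : ℕ) + 1 ∧ (p : ℕ) + 1 ≤ 2 ^ t - 1 ∧
        u p ∈ Y}).ncard ≤ m * r)
    (hlab₂ : m = 0 ∨ (m - 1) * r < ({p : Fin k | 2 ^ (t - 1) ≤ (p : ℕ) + 1 ∧
        (p : ℕ) + 1 ≤ 2 ^ t - 1 ∧ u p ∈ Y}).ncard) :
    ∃ m' : ℕ, (m' = m - 1 ∨ m' = m ∨ m' = m + 1) ∧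
      ({p : Fin k | 2 ^ (t - 1) ≤ (p : ℕ) + 1 ∧ (p : ℕ) + 1 ≤ 2 ^ t - 1 ∧
        v p ∈ Y}).ncard ≤ m' * r ∧
      (m' = 0 ∨ (m' - 1) * r < ({p : Fin k | 2 ^ (t - 1) ≤ (p : ℕ) + 1 ∧
        (p : ℕ) + 1 ≤ 2 ^ t - 1 ∧ v p ∈ Y}).ncard) := by
  classical
  set SU : Set (Fin k) := {p : Fin k | 2 ^ (t - 1) ≤ (p : ℕ) + 1 ∧
      (p : ℕ) + 1 ≤ 2 ^ t - 1 ∧ u p ∈ Y} with hSU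
  set SV : Set (Fin k) := {p : Fin k | 2 ^ (t - 1) ≤ (p : ℕ) + 1 ∧
      (p : ℕ) + 1 ≤ 2 ^ t - 1 ∧ v p ∈ Y} with hSV
  have hUV : (SU \ SV).ncard < r := by
    apply cross_lt G Y r hrank u v hmatch
    rintro p ⟨hp1, hp2⟩
    refine ⟨hp1.2.2, fun hvY => hp2 ⟨hp1.1, hp1.2.1, hvY⟩⟩
  have hVU : (SV \ SU).ncard < r := by
    apply cross_lt G Y r hrank v u
      (fun p q => by rw [G.adj_comm]; exact (hmatch q p).trans eq_comm)
    rintro p ⟨hp1, hp2⟩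
    refine ⟨hp1.2.2, fun huY => hp2 ⟨hp1.1, hp1.2.1, huY⟩⟩
  have hb : SV.ncard ≤ SU.ncard + (SV \ SU).ncard := by
    calc SV.ncard ≤ (SU ∪ (SV \ SU)).ncard := by
          apply Set.ncard_le_ncard _ (Set.toFinite _)
          intro p hp
          by_cases h : p ∈ SU
          · exact Or.inl h
          · exact Or.inr ⟨hp, h⟩
      _ ≤ SU.ncard + (SV \ SU).ncard := Set.ncard_union_le _ _
  have ha : SU.ncard ≤ SV.ncard + (SU \ SV).ncard := by
    calc SU.ncard ≤ (SV ∪ (SU \ SV)).ncard := by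
          apply Set.ncard_le_ncard _ (Set.toFinite _)
          intro p hp
          by_cases h : p ∈ SV
          · exact Or.inl h
          · exact Or.inr ⟨hp, h⟩
      _ ≤ SV.ncard + (SU \ SV).ncard := Set.ncard_union_le _ _
  exact arith_label r m SU.ncard SV.ncard (by omega) hlab₁ hlab₂ (by omega) (by omega)
end

section
/- Let G be a split graph whose vertex set is partitioned into four ordered sets X_1, X_2, X_3, X_4 of size k, where X_1 ∪ X_3 is a clique, X_2 ∪ X_4 is a stable set, and the triples (G, X_1, X_2), (G, X_2, X_3), (G, X_3, X_4) are regular crossings while (G, X_4, X_1) is an expanding crossing. Then G has Dilworth number at most 2. -/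
/-!
A set of pairwise incomparable vertices in the vicinal preorder `a ≤ b ↔ N(a) ⊆ N[b]` is an
antichain, so it suffices to cover `V` by the two chains `X₁ ∪ X₂` and `X₃ ∪ X₄`. In a split
graph the neighbourhood of a stable vertex lies in the clique, so it is below every clique
vertex; and since every crossing condition is monotone in both indices, the neighbourhoods
within each `Xᵢ` grow with the index: inside the clique trivially, across it by monotonicity.
-/

open Set SimpleGraph

theorem Finset.card_le_two_of_isAntichain_of_isChain {α : Type*} {r : α → α → Prop}
    {D : Finset α} {s t : Set α} (hD : IsAntichain r (D : Set α)) (hs : IsChain r s)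
    (ht : IsChain r t) (hst : (D : Set α) ⊆ s ∪ t) : D.card ≤ 2 := by
  have hDs := encard_le_one_iff_subsingleton.2 (inter_subsingleton_of_isAntichain_of_isChain hD hs)
  have hDt := encard_le_one_iff_subsingleton.2 (inter_subsingleton_of_isAntichain_of_isChain hD ht)
  rw [← Nat.cast_le (α := ℕ∞), ← encard_coe_eq_coe_finsetCard]
  calc (D : Set α).encard ≤ ((D ∩ s) ∪ (D ∩ t) : Set α).encard :=
        encard_le_encard fun x hx => (hst hx).imp (⟨hx, ·⟩) (⟨hx, ·⟩)
    _ ≤ (D ∩ s : Set α).encard + (D ∩ t : Set α).encard := encard_union_le _ _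
    _ ≤ 1 + 1 := add_le_add hDs hDt
    _ = 2 := one_add_one_eq_two

namespace SimpleGraph

variable {V : Type*} (G : SimpleGraph V)

def VicinalLE (a b : V) : Prop := G.neighborSet a ⊆ insert b (G.neighborSet b)

variable {G}

theorem vicinalLE_of_subset {a b : V} (h : G.neighborSet a ⊆ G.neighborSet b) : G.VicinalLE a b :=
  h.trans (subset_insert _ _)

theorem vicinalLE_of_mem_isClique {C : Set V} {a b : V} (hC : G.IsClique C) (hb : b ∈ C)
    (h : G.neighborSet a \ C ⊆ G.neighborSet b) : G.VicinalLE a b := by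
  intro v hv
  by_cases hvC : v ∈ C
  · obtain rfl | hvb := eq_or_ne v b
    · exact mem_insert _ _
    · exact mem_insert_of_mem _ (hC hb hvC hvb.symm)
  · exact mem_insert_of_mem _ (h ⟨hv, hvC⟩)

theorem neighborSet_subset_of_isIndepSet {C S : Set V} {a : V} (hS : G.IsIndepSet S)
    (hCS : C ∪ S = univ) (ha : a ∈ S) : G.neighborSet a ⊆ C := by
  intro v hv
  have hv' : v ∈ C ∪ S := hCS ▸ mem_univ v
  exact hv'.resolve_right fun hvS => hS ha hvS (G.ne_of_adj hv) hv

theorem monotone_neighborSet_inter_range {ι κ : Type*} [Preorder ι] {u : ι → V} {w : κ → V}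
    {P : ι → κ → Prop} (hadj : ∀ p q, G.Adj (u p) (w q) ↔ P p q)
    (hP : ∀ q, Monotone (P · q)) : Monotone fun p => G.neighborSet (u p) ∩ range w := by
  rintro p p' hpp v ⟨hv, q, rfl⟩
  exact ⟨(hadj p' q).2 (hP q hpp ((hadj p q).1 hv)), q, rfl⟩

theorem monotone_neighborSet_inter_range_union {ι κ κ' : Type*} [Preorder ι] {u : ι → V}
    {w : κ → V} {w' : κ' → V} {P : ι → κ → Prop} {P' : ι → κ' → Prop}
    (hadj : ∀ p q, G.Adj (u p) (w q) ↔ P p q) (hP : ∀ q, Monotone (P · q))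
    (hadj' : ∀ p q, G.Adj (u p) (w' q) ↔ P' p q) (hP' : ∀ q, Monotone (P' · q)) :
    Monotone fun p => G.neighborSet (u p) ∩ (range w ∪ range w') := by
  simp only [inter_union_distrib_left]
  exact (monotone_neighborSet_inter_range hadj hP).sup (monotone_neighborSet_inter_range hadj' hP')

theorem isChain_vicinalLE_of_isClique_of_isIndepSet {C S : Set V} (hC : G.IsClique C)
    (hS : G.IsIndepSet S) (hCS : C ∪ S = univ) {ι κ : Type*} [LinearOrder ι] [LinearOrder κ]
    {y : ι → V} {z : κ → V} (hyC : ∀ i, y i ∈ C) (hzS : ∀ i, z i ∈ S)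
    (hy : Monotone fun i => G.neighborSet (y i) ∩ S)
    (hz : Monotone fun i => G.neighborSet (z i) ∩ C) :
    IsChain G.VicinalLE (range y ∪ range z) := by
  have hyy : ∀ i j, i ≤ j → G.VicinalLE (y i) (y j) := fun i j hij =>
    vicinalLE_of_mem_isClique hC (hyC j) fun v ⟨hv, hvC⟩ =>
      (hy hij ⟨hv, (hCS ▸ mem_univ v : v ∈ C ∪ S).resolve_left hvC⟩).1
  have hzz : ∀ i j, i ≤ j → G.VicinalLE (z i) (z j) := fun i j hij =>
    vicinalLE_of_subset fun v hv =>
      (hz hij ⟨hv, neighborSet_subset_of_isIndepSet hS hCS (hzS i) hv⟩).1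
  have hzy : ∀ i j, G.VicinalLE (z i) (y j) := fun i j =>
    vicinalLE_of_mem_isClique hC (hyC j) fun v ⟨hv, hvC⟩ =>
      absurd (neighborSet_subset_of_isIndepSet hS hCS (hzS i) hv) hvC
  rintro a (⟨i, rfl⟩ | ⟨i, rfl⟩) b (⟨j, rfl⟩ | ⟨j, rfl⟩) -
  · exact (le_total i j).imp (hyy i j) (hyy j i)
  · exact Or.inr (hzy j i)
  · exact Or.inl (hzy i j)
  · exact (le_total i j).imp (hzz i j) (hzz j i)

end SimpleGraph

theorem stmt17_general {V : Type*} (G : SimpleGraph V) (k : ℕ)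
    (x₁ x₂ x₃ x₄ : Fin k → V)
    (hcover : Set.range x₁ ∪ Set.range x₂ ∪ Set.range x₃ ∪ Set.range x₄ = Set.univ)
    (hclique : G.IsClique (Set.range x₁ ∪ Set.range x₃))
    (hstable : ∀ a ∈ Set.range x₂ ∪ Set.range x₄, ∀ b ∈ Set.range x₂ ∪ Set.range x₄,
      ¬ G.Adj a b)
    (hc₁₂ : ∀ p q : Fin k, G.Adj (x₁ p) (x₂ q) ↔ k ≤ (p : ℕ) + (q : ℕ) + 1)
    (hc₂₃ : ∀ p q : Fin k, G.Adj (x₂ p) (x₃ q) ↔ k ≤ (p : ℕ) + (q : ℕ) + 1)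
    (hc₃₄ : ∀ p q : Fin k, G.Adj (x₃ p) (x₄ q) ↔ k ≤ (p : ℕ) + (q : ℕ) + 1)
    (hc₄₁ : ∀ p q : Fin k, G.Adj (x₄ p) (x₁ q) ↔ 2 * k + 2 ≤ 2 * ((p : ℕ) + 1) + ((q : ℕ) + 1)) :
    ∀ D : Finset V,
      (∀ a ∈ D, ∀ b ∈ D, a ≠ b →
        (G.neighborSet a \ insert b (G.neighborSet b)).Nonempty ∧
        (G.neighborSet b \ insert a (G.neighborSet a)).Nonempty) →
      D.card ≤ 2 := by
  intro D hD
  have hanti : IsAntichain G.VicinalLE (D : Set V) := fun a ha b hb hab =>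
    sdiff_nonempty.1 (hD a ha b hb hab).1
  have hS : G.IsIndepSet (range x₂ ∪ range x₄) := fun a ha b hb _ => hstable a ha b hb
  have hCS : (range x₁ ∪ range x₃) ∪ (range x₂ ∪ range x₄) = univ := by
    rw [union_union_union_comm, ← union_assoc, hcover]
  have hswap {x y : Fin k → V} {P : Fin k → Fin k → Prop} (h : ∀ p q, G.Adj (x p) (y q) ↔ P p q)
      (p q : Fin k) : G.Adj (y p) (x q) ↔ P q p := (G.adj_comm _ _).trans (h q p)
  have m₁ := monotone_neighborSet_inter_range_union hc₁₂ (fun _ _ _ _ _ => by omega)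
    (hswap hc₄₁) (fun _ _ _ _ _ => by omega)
  have m₂ := monotone_neighborSet_inter_range_union (hswap hc₁₂) (fun _ _ _ _ _ => by omega)
    hc₂₃ (fun _ _ _ _ _ => by omega)
  have m₃ := monotone_neighborSet_inter_range_union (hswap hc₂₃) (fun _ _ _ _ _ => by omega)
    hc₃₄ (fun _ _ _ _ _ => by omega)
  have m₄ := monotone_neighborSet_inter_range_union hc₄₁ (fun _ _ _ _ _ => by omega)
    (hswap hc₃₄) (fun _ _ _ _ _ => by omega)
  have chain₁ := isChain_vicinalLE_of_isClique_of_isIndepSet hclique hS hCS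
    (fun i => Or.inl ⟨i, rfl⟩) (fun i => Or.inl ⟨i, rfl⟩) m₁ m₂
  have chain₂ := isChain_vicinalLE_of_isClique_of_isIndepSet hclique hS hCS
    (fun i => Or.inr ⟨i, rfl⟩) (fun i => Or.inr ⟨i, rfl⟩) m₃ m₄
  refine D.card_le_two_of_isAntichain_of_isChain hanti chain₁ chain₂ ?_
  rw [← union_assoc, hcover]
  exact subset_univ _

/-- Let `G` be a split graph whose vertex set is partitioned into four ordered
sets `X_1, X_2, X_3, X_4` of size `k`, where `X_1 ∪ X_3` is a clique,
`X_2 ∪ X_4` is a stable set, the triples `(G,X_1,X_2)`, `(G,X_2,X_3)`,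
`(G,X_3,X_4)` are regular crossings (1-based: edge iff `j + j' ≥ k+1`) and
`(G,X_4,X_1)` is an expanding crossing (1-based: edge iff `2j + j' ≥ 2k+2`).
Then `G` has Dilworth number at most 2. -/
theorem stmt17 {V : Type*} [Fintype V] [DecidableEq V] (G : SimpleGraph V) (k : ℕ)
    (x₁ x₂ x₃ x₄ : Fin k → V)
    (h₁ : Function.Injective x₁) (h₂ : Function.Injective x₂)
    (h₃ : Function.Injective x₃) (h₄ : Function.Injective x₄)
    (hd₁₂ : Disjoint (Set.range x₁) (Set.range x₂))
    (hd₁₃ : Disjoint (Set.range x₁) (Set.range x₃))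
    (hd₁₄ : Disjoint (Set.range x₁) (Set.range x₄))
    (hd₂₃ : Disjoint (Set.range x₂) (Set.range x₃))
    (hd₂₄ : Disjoint (Set.range x₂) (Set.range x₄))
    (hd₃₄ : Disjoint (Set.range x₃) (Set.range x₄))
    (hcover : Set.range x₁ ∪ Set.range x₂ ∪ Set.range x₃ ∪ Set.range x₄ = Set.univ)
    (hclique : G.IsClique (Set.range x₁ ∪ Set.range x₃))
    (hstable : ∀ a ∈ Set.range x₂ ∪ Set.range x₄, ∀ b ∈ Set.range x₂ ∪ Set.range x₄,
      ¬ G.Adj a b)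
    (hc₁₂ : ∀ p q : Fin k, G.Adj (x₁ p) (x₂ q) ↔ k ≤ (p : ℕ) + (q : ℕ) + 1)
    (hc₂₃ : ∀ p q : Fin k, G.Adj (x₂ p) (x₃ q) ↔ k ≤ (p : ℕ) + (q : ℕ) + 1)
    (hc₃₄ : ∀ p q : Fin k, G.Adj (x₃ p) (x₄ q) ↔ k ≤ (p : ℕ) + (q : ℕ) + 1)
    (hc₄₁ : ∀ p q : Fin k, G.Adj (x₄ p) (x₁ q) ↔ 2 * k + 2 ≤ 2 * ((p : ℕ) + 1) + ((q : ℕ) + 1)) :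
    ∀ D : Finset V,
      (∀ a ∈ D, ∀ b ∈ D, a ≠ b →
        (G.neighborSet a \ insert b (G.neighborSet b)).Nonempty ∧
        (G.neighborSet b \ insert a (G.neighborSet a)).Nonempty) →
      D.card ≤ 2 :=
  stmt17_general G k x₁ x₂ x₃ x₄ hcover hclique hstable hc₁₂ hc₂₃ hc₃₄ hc₄₁
end
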